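/- The Takagi-type function T(x) = Σ_{n=0}^∞ γ^n Φ(2^n x), where Φ(y) = dist(y, ℤ) and γ ∈ (1/2, 1), is Hölder continuous on [0,1] with exponent H = log γ / log(1/2), i.e. there is a constant C such that |T(x) - T(y)| ≤ C|x-y|^H for all x, y ∈ [0,1]. -/

import Mathlib

/-!
Splitting the series at the scale `2 ^ N ≈ 1 / |x - y|`, each term is at most
`γ ^ n * min (2 ^ n * |x - y|) 1` because `Phi` is 1-Lipschitz and bounded. The head is a
geometric sum of ratio `2 γ > 1` and the tail one of ratio `γ < 1`, so both are `O(γ ^ N)`,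
and `γ ^ N ≈ |x - y| ^ H` because `H` is chosen so that `(1 / 2) ^ H = γ`.
-/

noncomputable section

def Phi (y : ℝ) : ℝ := |y - round y|

/-- The Takagi-type function with roughness parameter `γ`. -/
def Tak (γ : ℝ) (x : ℝ) : ℝ := ∑' n : ℕ, γ ^ n * Phi (2 ^ n * x)

lemma Phi_nonneg (y : ℝ) : 0 ≤ Phi y := abs_nonneg _

lemma Phi_le_half (y : ℝ) : Phi y ≤ 1 / 2 := abs_sub_round y

lemma Phi_sub_Phi_le (a b : ℝ) : Phi a - Phi b ≤ |a - b| :=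
  calc Phi a - Phi b ≤ |a - round b| - |b - round b| := sub_le_sub_right (round_le a (round b)) _
    _ ≤ |(a - round b) - (b - round b)| := abs_sub_abs_le_abs_sub _ _
    _ = |a - b| := by ring_nf

lemma abs_Phi_sub_Phi_le_min (a b : ℝ) : |Phi a - Phi b| ≤ min |a - b| 1 := by
  refine le_min (abs_sub_le_iff.2 ⟨Phi_sub_Phi_le a b, ?_⟩) (abs_sub_le_iff.2 ⟨?_, ?_⟩)
  · rw [abs_sub_comm]; exact Phi_sub_Phi_le b a
  all_goals linarith [Phi_nonneg a, Phi_le_half a, Phi_nonneg b, Phi_le_half b]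

section GeometricSplit

variable {γ b d : ℝ}

lemma summable_pow_mul_min (hγ0 : 0 ≤ γ) (hγ1 : γ < 1) (hb : 0 ≤ b) (hd : 0 ≤ d) :
    Summable fun n : ℕ => γ ^ n * min (b ^ n * d) 1 :=
  (summable_geometric_of_lt_one hγ0 hγ1).of_nonneg_of_le
    (fun n => by positivity) fun n => mul_le_of_le_one_right (by positivity) (min_le_right _ _)

lemma tsum_pow_mul_min_le (hγ0 : 0 ≤ γ) (hγ1 : γ < 1) (hbγ : 1 < b * γ) (hd : 0 ≤ d)
    {N : ℕ} (hN : b ^ N * d ≤ 1) :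
    ∑' n : ℕ, γ ^ n * min (b ^ n * d) 1 ≤ γ ^ N * (1 / (b * γ - 1) + 1 / (1 - γ)) := by
  have hb : 0 ≤ b := by nlinarith
  set f : ℕ → ℝ := fun n => γ ^ n * min (b ^ n * d) 1
  have hf := summable_pow_mul_min hγ0 hγ1 hb hd
  have head : ∑ n ∈ Finset.range N, f n ≤ γ ^ N / (b * γ - 1) :=
    calc ∑ n ∈ Finset.range N, f n ≤ ∑ n ∈ Finset.range N, (b * γ) ^ n * d :=
          Finset.sum_le_sum fun n _ =>
            (mul_le_mul_of_nonneg_left (min_le_left _ _) (by positivity)).trans_eq (by ring)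
      _ = ((b * γ) ^ N - 1) / (b * γ - 1) * d := by rw [← Finset.sum_mul, geom_sum_eq hbγ.ne']
      _ ≤ γ ^ N / (b * γ - 1) := by
          rw [div_mul_eq_mul_div]
          gcongr
          calc ((b * γ) ^ N - 1) * d ≤ γ ^ N * (b ^ N * d) := by nlinarith [mul_pow b γ N]
            _ ≤ γ ^ N := mul_le_of_le_one_right (pow_nonneg hγ0 N) hN
  have tail : ∑' n : ℕ, f (n + N) ≤ γ ^ N / (1 - γ) :=
    calc ∑' n : ℕ, f (n + N) ≤ ∑' n : ℕ, γ ^ N * γ ^ n :=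
          ((summable_nat_add_iff N).2 hf).tsum_le_tsum
            (fun n => by
              rw [← pow_add, add_comm N]
              exact mul_le_of_le_one_right (by positivity) (min_le_right _ _))
            ((summable_geometric_of_lt_one hγ0 hγ1).mul_left _)
      _ = γ ^ N / (1 - γ) := by
          rw [tsum_mul_left, tsum_geometric_of_lt_one hγ0 hγ1, div_eq_mul_inv]
  rw [← hf.sum_add_tsum_nat_add N]
  calc _ ≤ γ ^ N / (b * γ - 1) + γ ^ N / (1 - γ) := add_le_add head tail
    _ = _ := by ring

lemma pow_succ_le_rpow_logb (hγ0 : 0 < γ) (hγ1 : γ < 1) (hb : 1 < b) {N : ℕ}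
    (hN : (b ^ (N + 1))⁻¹ ≤ d) : γ ^ (N + 1) ≤ d ^ Real.logb b⁻¹ γ := by
  have hb' : b⁻¹ < 1 := inv_lt_one_of_one_lt₀ hb
  have hb0 : 0 < b⁻¹ := by positivity
  calc γ ^ (N + 1) = ((b ^ (N + 1))⁻¹) ^ Real.logb b⁻¹ γ := by
        rw [← inv_pow, ← Real.rpow_natCast b⁻¹, ← Real.rpow_mul hb0.le, mul_comm ((N + 1 : ℕ) : ℝ),
          Real.rpow_mul hb0.le, Real.rpow_logb hb0 hb'.ne hγ0, Real.rpow_natCast]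
    _ ≤ d ^ Real.logb b⁻¹ γ :=
        Real.rpow_le_rpow (by positivity) hN (Real.logb_nonneg_of_base_lt_one hb0 hb' hγ0 hγ1.le)

lemma tsum_pow_mul_min_le_rpow (hγ0 : 0 < γ) (hγ1 : γ < 1) (hbγ : 1 < b * γ) (hd0 : 0 < d)
    (hd1 : d ≤ 1) :
    ∑' n : ℕ, γ ^ n * min (b ^ n * d) 1 ≤
      (1 / (b * γ - 1) + 1 / (1 - γ)) / γ * d ^ Real.logb b⁻¹ γ := by
  have hb : 1 < b := by nlinarith
  obtain ⟨N, hN_le, hN_lt⟩ := exists_nat_pow_near (one_le_inv₀ hd0 |>.2 hd1) hb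
  have hN : b ^ N * d ≤ 1 := (le_div_iff₀ hd0).1 (by rwa [one_div])
  have hN' : (b ^ (N + 1))⁻¹ ≤ d := ((inv_lt_comm₀ hd0 (by positivity)).1 hN_lt).le
  calc _ ≤ γ ^ N * (1 / (b * γ - 1) + 1 / (1 - γ)) := tsum_pow_mul_min_le hγ0.le hγ1 hbγ hd0.le hN
    _ = (1 / (b * γ - 1) + 1 / (1 - γ)) / γ * γ ^ (N + 1) := by field_simp; ring
    _ ≤ _ := by
        gcongr
        exact pow_succ_le_rpow_logb hγ0 hγ1 hb hN'

end GeometricSplit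

section Takagi

variable {γ : ℝ}

lemma summable_Tak (hγ0 : 0 ≤ γ) (hγ1 : γ < 1) (x : ℝ) :
    Summable fun n : ℕ => γ ^ n * Phi (2 ^ n * x) :=
  (summable_geometric_of_lt_one hγ0 hγ1).of_nonneg_of_le
    (fun n => mul_nonneg (pow_nonneg hγ0 n) (Phi_nonneg _))
    fun n => mul_le_of_le_one_right (pow_nonneg hγ0 n) ((Phi_le_half _).trans (by norm_num))

lemma abs_Tak_sub_Tak_le (hγ0 : 0 ≤ γ) (hγ1 : γ < 1) (x y : ℝ) :
    |Tak γ x - Tak γ y| ≤ ∑' n : ℕ, γ ^ n * min (2 ^ n * |x - y|) 1 := by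
  have hterm (n : ℕ) : ‖γ ^ n * Phi (2 ^ n * x) - γ ^ n * Phi (2 ^ n * y)‖ ≤
      γ ^ n * min (2 ^ n * |x - y|) 1 := by
    have hPhi := abs_Phi_sub_Phi_le_min (2 ^ n * x) (2 ^ n * y)
    rw [← mul_sub, abs_mul, abs_of_pos (by positivity : (0 : ℝ) < 2 ^ n)] at hPhi
    rw [Real.norm_eq_abs, ← mul_sub, abs_mul, abs_of_nonneg (pow_nonneg hγ0 n)]
    exact mul_le_mul_of_nonneg_left hPhi (pow_nonneg hγ0 n)
  rw [Tak, Tak, ← (summable_Tak hγ0 hγ1 x).tsum_sub (summable_Tak hγ0 hγ1 y)]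
  exact tsum_of_norm_bounded
    (summable_pow_mul_min hγ0 hγ1 zero_le_two (abs_nonneg (x - y))).hasSum hterm

end Takagi

/-- `T` is Hölder continuous on `[0,1]` with exponent `H = log γ / log (1/2)`. -/
theorem stmt0 (γ : ℝ) (hγ : γ ∈ Set.Ioo (1/2 : ℝ) 1) :
    ∃ C : ℝ, ∀ x ∈ Set.Icc (0:ℝ) 1, ∀ y ∈ Set.Icc (0:ℝ) 1,
      |Tak γ x - Tak γ y| ≤ C * |x - y| ^ (Real.log γ / Real.log (1/2)) := by
  obtain ⟨hγ2, hγ1⟩ := hγ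
  have hH : 0 < Real.log γ / Real.log (1/2) :=
    div_pos_of_neg_of_neg (Real.log_neg (by linarith) hγ1) (Real.log_neg (by norm_num) (by norm_num))
  refine ⟨(1 / (2 * γ - 1) + 1 / (1 - γ)) / γ, fun x hx y hy => ?_⟩
  rcases eq_or_ne x y with rfl | hxy
  · simp only [sub_self, abs_zero, Real.zero_rpow hH.ne', mul_zero, le_refl]
  have hd1 : |x - y| ≤ 1 := abs_sub_le_iff.2 ⟨by linarith [hx.2, hy.1], by linarith [hx.1, hy.2]⟩
  rw [Real.log_div_log, one_div (2 : ℝ)]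
  exact (abs_Tak_sub_Tak_le (by linarith) hγ1 x y).trans
    (tsum_pow_mul_min_le_rpow (by linarith) hγ1 (by linarith : 1 < 2 * γ) (abs_sub_pos.2 hxy) hd1)
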